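/- arXiv:2305.08203 — 3 statements merged into one kernel-verified Lean document; each statement's English description precedes it below -/
import Mathlib

section
/- Let γ > 3, θ > 0, and ψ(x) = x^{-1/(γ-1)}. For each n, let G_n be the random graph on vertex set {1, …, n} in which, independently for each pair i < j, the edge {i, j} is present with probability min(1, θ ψ(i/n) ψ(j/n)/n). Then there exists a constant c > 0, depending only on γ and θ, such that P( max_v |𝒞_v| ≥ c n^{1/(γ−1)} ) → 1 as n → ∞; indeed with probability tending to 1 the degree of vertex 1 is at least c n^{1/(γ−1)}, and the component containing a vertex has at least as many vertices as that vertex's degree. -/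
/-!
The degree of vertex `1` is a sum of independent edge indicators. Since `ψ(1/n) = n^{1/(γ-1)}`
and `ψ ≥ 1` on `(0,1]`, each has success probability at least `θ n^{1/(γ-1)-1}` once this is
below `1`, so the mean degree is at least `θ n^{1/(γ-1)}/2`. A sum of independent indicators has
variance at most its mean, so by Chebyshev the degree falls below half this bound only with
probability `O(n^{-1/(γ-1)})`. Finally, all neighbours of a vertex lie in its component.
-/

open MeasureTheory ProbabilityTheory Filter Set Topology

lemma SimpleGraph.card_neighborSet_le_ncard_supp {V : Type*} [Finite V] (G : SimpleGraph V)
    (v : V) : Nat.card (G.neighborSet v) ≤ (G.connectedComponentMk v).supp.ncard :=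
  Set.ncard_le_ncard (fun _ hw => SimpleGraph.ConnectedComponent.sound (G.adj_symm hw).reachable)

section IndicatorSum

variable {Ω ι : Type*} [MeasurableSpace Ω] {μ : Measure Ω} [IsProbabilityMeasure μ]
  {A : ι → Set Ω}

lemma variance_indicator_one_le {B : Set Ω} (hB : MeasurableSet B) :
    Var[B.indicator 1; μ] ≤ μ.real B := by
  have hsq : B.indicator (1 : Ω → ℝ) ^ 2 = B.indicator 1 := by
    ext ω; by_cases h : ω ∈ B <;> simp [h]
  have hX : MemLp (B.indicator (1 : Ω → ℝ)) 2 μ := (memLp_const 1).indicator hB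
  rw [variance_eq_sub hX, hsq, integral_indicator_one hB]
  nlinarith [sq_nonneg (μ.real B)]

lemma integral_sum_indicator_one (hA : ∀ i, MeasurableSet (A i)) (S : Finset ι) :
    μ[∑ i ∈ S, (A i).indicator 1] = ∑ i ∈ S, μ.real (A i) := by
  simp only [Finset.sum_apply]
  rw [integral_finsetSum S fun i _ => (integrable_const 1).indicator (hA i)]
  exact Finset.sum_congr rfl fun i _ => integral_indicator_one (hA i)

lemma variance_sum_indicator_one_le (hA : ∀ i, MeasurableSet (A i)) (hind : iIndepSet A μ)
    (S : Finset ι) : Var[∑ i ∈ S, (A i).indicator 1; μ] ≤ ∑ i ∈ S, μ.real (A i) := by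
  have hX : ∀ i ∈ S, MemLp ((A i).indicator (1 : Ω → ℝ)) 2 μ :=
    fun i _ => (memLp_const 1).indicator (hA i)
  rw [IndepFun.variance_sum hX fun i _ j _ hij => hind.iIndepFun_indicator.indepFun hij]
  exact Finset.sum_le_sum fun i _ => variance_indicator_one_le (hA i)

lemma one_sub_ofReal_le_measure_half_le_sum_indicator (hA : ∀ i, MeasurableSet (A i))
    (hind : iIndepSet A μ) (S : Finset ι) {M : ℝ} (hM : 0 < M)
    (hMS : M ≤ ∑ i ∈ S, μ.real (A i)) :
    1 - ENNReal.ofReal (4 / M) ≤ μ {ω | M / 2 ≤ ∑ i ∈ S, (A i).indicator 1 ω} := by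
  set D : Ω → ℝ := ∑ i ∈ S, (A i).indicator 1
  set m := ∑ i ∈ S, μ.real (A i)
  set bad := {ω | m / 2 ≤ |D ω - μ[D]|}
  have hm : 0 < m := hM.trans_le hMS
  have hD : MemLp D 2 μ := memLp_finsetSum' S fun i _ => (memLp_const 1).indicator (hA i)
  have hDm : Measurable D := by
    simp only [D, Finset.sum_fn]
    exact Finset.measurable_sum S fun i _ => measurable_one.indicator (hA i)
  have hcheb : μ bad ≤ ENNReal.ofReal (4 / M) := by
    refine (meas_ge_le_variance_div_sq hD (half_pos hm)).trans (ENNReal.ofReal_le_ofReal ?_)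
    calc Var[D; μ] / (m / 2) ^ 2 ≤ m / (m / 2) ^ 2 := by
          gcongr; exact variance_sum_indicator_one_le hA hind S
      _ = 4 / m := by field_simp; ring
      _ ≤ 4 / M := by gcongr
  have hgood : badᶜ ⊆ {ω | M / 2 ≤ ∑ i ∈ S, (A i).indicator 1 ω} := by
    intro ω hω
    rw [mem_compl_iff, mem_ofPred_eq, not_le, integral_sum_indicator_one hA S] at hω
    simp only [D, Finset.sum_apply] at hω
    rw [mem_ofPred_eq]
    linarith [(abs_lt.1 hω).1]
  calc 1 - ENNReal.ofReal (4 / M) ≤ 1 - μ bad := tsub_le_tsub_left hcheb 1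
    _ = μ badᶜ := (prob_compl_eq_one_sub
        (measurableSet_le measurable_const ((hDm.sub measurable_const).abs))).symm
    _ ≤ _ := measure_mono hgood

end IndicatorSum

section RandomGraph

variable {Ω V : Type*} [MeasurableSpace Ω] {μ : Measure Ω} [IsProbabilityMeasure μ] [Fintype V]
  {G : Ω → SimpleGraph V}

lemma one_sub_ofReal_le_measure_half_le_degree
    (hmeas : ∀ e : Sym2 V, MeasurableSet {ω | e ∈ (G ω).edgeSet})
    (hindep : iIndepSet (fun e : Sym2 V => {ω | e ∈ (G ω).edgeSet}) μ) (v : V) {p M : ℝ}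
    (hp : ∀ w ≠ v, p ≤ μ.real {ω | (G ω).Adj v w}) (hM : 0 < M)
    (hMp : M ≤ (Fintype.card V - 1) * p) :
    1 - ENNReal.ofReal (4 / M) ≤ μ {ω | M / 2 ≤ Nat.card ((G ω).neighborSet v)} := by
  classical
  have hind : iIndepSet (fun w => {ω | (G ω).Adj v w}) μ :=
    hindep.precomp (g := fun w => s(v, w)) fun _ _ => Sym2.congr_right.mp
  have hsum : M ≤ ∑ w, μ.real {ω | (G ω).Adj v w} := calc
    M ≤ (Fintype.card V - 1) * p := hMp
    _ = ∑ _w ∈ Finset.univ.erase v, p := by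
      rw [Finset.sum_const, Finset.card_erase_of_mem (Finset.mem_univ v), Finset.card_univ,
        nsmul_eq_mul, Nat.cast_sub (Fintype.card_pos_iff.mpr ⟨v⟩), Nat.cast_one]
    _ ≤ ∑ w ∈ Finset.univ.erase v, μ.real {ω | (G ω).Adj v w} :=
      Finset.sum_le_sum fun w hw => hp w (Finset.ne_of_mem_erase hw)
    _ ≤ ∑ w, μ.real {ω | (G ω).Adj v w} :=
      Finset.sum_le_sum_of_subset_of_nonneg (Finset.erase_subset v _)
        fun _ _ _ => measureReal_nonneg
  convert one_sub_ofReal_le_measure_half_le_sum_indicator (fun w => hmeas s(v, w)) hind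
    Finset.univ hM hsum using 4 with ω
  simp [Set.indicator_apply, Finset.sum_boole, Nat.card_eq_fintype_card]

end RandomGraph

lemma rpow_sub_one_le_chungLu_weight {a θ n k : ℝ} (ha : 0 ≤ a) (hθ : 0 ≤ θ) (hk : 0 < k)
    (hkn : k ≤ n) : θ * n ^ (a - 1) ≤ θ * (1 / n) ^ (-a) * (k / n) ^ (-a) / n := by
  have hn : 0 < n := hk.trans_le hkn
  have hψ : 1 ≤ (k / n) ^ (-a) :=
    Real.one_le_rpow_of_pos_of_le_one_of_nonpos (by positivity) ((div_le_one hn).2 hkn)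
      (neg_nonpos.2 ha)
  calc θ * n ^ (a - 1) = θ * (1 / n) ^ (-a) / n := by
        rw [one_div, Real.inv_rpow hn.le, ← Real.rpow_neg hn.le, neg_neg,
          Real.rpow_sub_one hn.ne']
        ring
    _ ≤ θ * (1 / n) ^ (-a) * (k / n) ^ (-a) / n :=
        div_le_div_of_nonneg_right (le_mul_of_one_le_right (by positivity) hψ) hn.le

lemma chungLu_one_sub_le_measure_degree_zero {γ θ : ℝ} (hγ : 1 < γ) (hθ : 0 < θ) {n : ℕ}
    (hn : 2 ≤ n) (hsmall : θ * (n : ℝ) ^ ((1 : ℝ) / (γ - 1) - 1) ≤ 1)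
    {Ω : Type*} [MeasurableSpace Ω] {μ : Measure Ω} [IsProbabilityMeasure μ]
    {G : Ω → SimpleGraph (Fin n)}
    (hmeas : ∀ p : Sym2 (Fin n), MeasurableSet {ω | p ∈ (G ω).edgeSet})
    (hindep : iIndepSet (fun p : Sym2 (Fin n) => {ω | p ∈ (G ω).edgeSet}) μ)
    (hedge : ∀ i j : Fin n, i ≠ j →
      μ {ω | (G ω).Adj i j} =
        ENNReal.ofReal (min 1
          (θ * (((i : ℕ) + 1 : ℝ) / n) ^ (-(1 / (γ - 1)))
             * (((j : ℕ) + 1 : ℝ) / n) ^ (-(1 / (γ - 1))) / n))) :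
    1 - ENNReal.ofReal (8 / (θ * (n : ℝ) ^ ((1 : ℝ) / (γ - 1)))) ≤
      μ {ω | ∀ v : Fin n, (v : ℕ) = 0 →
        θ / 4 * (n : ℝ) ^ ((1 : ℝ) / (γ - 1))
          ≤ (Nat.card ((G ω).neighborSet v) : ℝ)} := by
  set s : ℝ := 1 / (γ - 1)
  have hs : 0 ≤ s := (one_div_pos.2 (sub_pos.2 hγ)).le
  have hn0 : (0 : ℝ) < n := by positivity
  set v₀ : Fin n := ⟨0, by omega⟩
  have hp : ∀ w ≠ v₀, θ * (n : ℝ) ^ (s - 1) ≤ μ.real {ω | (G ω).Adj v₀ w} := by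
    intro w hw
    have hweight : θ * (n : ℝ) ^ (s - 1) ≤
        θ * (((v₀ : ℕ) + 1 : ℝ) / n) ^ (-s) * (((w : ℕ) + 1 : ℝ) / n) ^ (-s) / n := by
      simpa [v₀] using rpow_sub_one_le_chungLu_weight (n := n) hs hθ.le
        (Nat.cast_add_one_pos (w : ℕ)) (by exact_mod_cast w.isLt)
    rw [measureReal_def, hedge v₀ w hw.symm, ENNReal.toReal_ofReal
      (le_min zero_le_one ((by positivity : 0 ≤ θ * (n : ℝ) ^ (s - 1)).trans hweight))]
    exact le_min hsmall hweight
  have hM : θ / 2 * (n : ℝ) ^ s ≤ (Fintype.card (Fin n) - 1) * (θ * (n : ℝ) ^ (s - 1)) := by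
    have hn2 : (2 : ℝ) ≤ n := by exact_mod_cast hn
    have hsplit : (n : ℝ) ^ s = n * (n : ℝ) ^ (s - 1) := by
      rw [Real.rpow_sub_one hn0.ne']; field_simp
    rw [Fintype.card_fin, hsplit]
    nlinarith [mul_nonneg (sub_nonneg.2 hn2) (mul_pos hθ (Real.rpow_pos_of_pos hn0 (s - 1))).le]
  have hdeg := one_sub_ofReal_le_measure_half_le_degree hmeas hindep v₀ hp (by positivity) hM
  rw [show 4 / (θ / 2 * (n : ℝ) ^ s) = 8 / (θ * (n : ℝ) ^ s) by field_simp; ring] at hdeg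
  refine hdeg.trans (measure_mono fun ω hω v hv => ?_)
  rw [show v = v₀ from Fin.ext hv]
  linarith [hω.out]

lemma tendsto_measure_nhds_one_of_one_sub_le {α : Type*} {l : Filter α} {Ω : α → Type*}
    [∀ a, MeasurableSpace (Ω a)] {μ : ∀ a, Measure (Ω a)}
    [∀ a, IsProbabilityMeasure (μ a)]
    {E : ∀ a, Set (Ω a)} {ε : α → ℝ} (hε : Tendsto ε l (𝓝 0))
    (hE : ∀ᶠ a in l, 1 - ENNReal.ofReal (ε a) ≤ μ a (E a)) :
    Tendsto (fun a => μ a (E a)) l (𝓝 1) := by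
  have hlow : Tendsto (fun a => 1 - ENNReal.ofReal (ε a)) l (𝓝 1) := by
    simpa using ENNReal.Tendsto.sub tendsto_const_nhds
      (ENNReal.tendsto_ofReal hε) (Or.inl ENNReal.one_ne_top)
  exact tendsto_of_tendsto_of_tendsto_of_le_of_le' hlow tendsto_const_nhds hE
    (Eventually.of_forall fun a => prob_le_one)

/-- Chung–Lu graphs with `γ > 3`, `θ > 0`.  `G n` is the random graph
on `{1,…,n}` (encoded as `Fin n`, vertex `i : Fin n` representing label `i+1`)
where, independently for distinct pairs, the edge `{i,j}` is present with
probability `min 1 (θ ψ((i+1)/n) ψ((j+1)/n)/n)`, `ψ(x) = x^(-1/(γ-1))`.  Then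
there is `c > 0` (depending only on `γ, θ`) with
`P(max_v |𝒞_v| ≥ c n^(1/(γ-1))) → 1`; indeed with probability tending to `1` the
degree of vertex `1` (index `0` in `Fin n`) is at least `c n^(1/(γ-1))`, and
deterministically the component of a vertex has at least as many vertices as the
vertex's degree. -/
theorem chungLu_max_cluster_lower_bound (γ θ : ℝ) (hγ : 3 < γ) (hθ0 : 0 < θ)
    (Ω : ℕ → Type) [∀ n, MeasurableSpace (Ω n)]
    (μ : ∀ n, Measure (Ω n)) [∀ n, IsProbabilityMeasure (μ n)]
    (G : ∀ n, Ω n → SimpleGraph (Fin n))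
    (hmeas : ∀ n (p : Sym2 (Fin n)), MeasurableSet {ω | p ∈ (G n ω).edgeSet})
    (hindep : ∀ n,
      iIndepSet (fun p : Sym2 (Fin n) => {ω | p ∈ (G n ω).edgeSet}) (μ n))
    (hedge : ∀ n, ∀ i j : Fin n, i ≠ j →
      μ n {ω | (G n ω).Adj i j} =
        ENNReal.ofReal (min 1
          (θ * (((i : ℕ) + 1 : ℝ) / n) ^ (-(1 / (γ - 1)))
             * (((j : ℕ) + 1 : ℝ) / n) ^ (-(1 / (γ - 1))) / n))) :
    ∃ c : ℝ, 0 < c ∧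
      Tendsto
        (fun n => μ n {ω | ∀ v : Fin n, (v : ℕ) = 0 →
          c * (n : ℝ) ^ ((1:ℝ) / (γ - 1))
            ≤ (Nat.card ((G n ω).neighborSet v) : ℝ)})
        atTop (nhds 1) ∧
      Tendsto
        (fun n => μ n {ω | ∃ v : Fin n,
          c * (n : ℝ) ^ ((1:ℝ) / (γ - 1))
            ≤ (((G n ω).connectedComponentMk v).supp.ncard : ℝ)})
        atTop (nhds 1) ∧
      ∀ n (ω : Ω n) (v : Fin n),
        Nat.card ((G n ω).neighborSet v)
          ≤ ((G n ω).connectedComponentMk v).supp.ncard := by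
  set s : ℝ := 1 / (γ - 1)
  have hs0 : 0 < s := one_div_pos.2 (by linarith)
  have hs1 : s < 1 := (div_lt_one (by linarith)).2 (by linarith)
  have hsmall : ∀ᶠ n : ℕ in atTop, θ * (n : ℝ) ^ (s - 1) ≤ 1 := by
    have h := ((tendsto_rpow_neg_atTop (sub_pos.2 hs1)).comp
      tendsto_natCast_atTop_atTop).const_mul θ
    rw [mul_zero] at h
    simpa [neg_sub] using h.eventually (eventually_le_nhds one_pos)
  have hε : Tendsto (fun n : ℕ => 8 / (θ * (n : ℝ) ^ s)) atTop (𝓝 0) :=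
    tendsto_const_nhds.div_atTop <| (tendsto_rpow_atTop hs0).comp
      tendsto_natCast_atTop_atTop |>.const_mul_atTop hθ0
  have hdeg := tendsto_measure_nhds_one_of_one_sub_le hε <|
    (hsmall.and (eventually_ge_atTop 2)).mono fun n ⟨hθn, hn⟩ =>
      chungLu_one_sub_le_measure_degree_zero (by linarith) hθ0 hn hθn (hmeas n) (hindep n)
        (hedge n)
  refine ⟨θ / 4, by positivity, hdeg, ?_,
    fun n ω v => (G n ω).card_neighborSet_le_ncard_supp v⟩
  refine tendsto_of_tendsto_of_tendsto_of_le_of_le' hdeg tendsto_const_nhds ?_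
    (Eventually.of_forall fun n => prob_le_one)
  filter_upwards [eventually_gt_atTop 0] with n hn
  exact measure_mono fun ω hω => ⟨⟨0, hn⟩, (hω _ rfl).trans
    (by exact_mod_cast (G n ω).card_neighborSet_le_ncard_supp _)⟩
end

section
/- Let γ > 3, ψ(x) = x^{-1/(γ-1)} on (0,1], g(x) = ∫₀¹ ψ(b)(1 − exp(−x ψ(b))) db, and θ_c = 1/∫₀¹ ψ(x)² dx = (γ−3)/(γ−1). Then for θ > 0 the equation A = θ g(A) has a solution A > 0 if and only if θ > θ_c, and when θ > θ_c the positive solution is unique. -/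
/-!
The ratio `g(A)/A = ∫ ψ² · (1 - e^{-Aψ})/(Aψ)` is strictly decreasing in `A > 0`, because
`t ↦ (1 - e^{-t})/t` is a secant slope of the strictly convex `exp`, and by dominated convergence
it tends to `∫ ψ² = 1/θ_c` as `A → 0⁺`. A positive solution of `A = θ g(A)`, i.e. of
`g(A)/A = 1/θ`, therefore forces `θ > θ_c` and is unique; conversely, for `θ > θ_c` the continuous
function `θ g(A) - A` is positive near `0` and negative for large `A` since `g ≤ ∫ ψ`.
-/

open MeasureTheory Filter Set Topology Real

lemma one_sub_exp_neg_div_strictAntiOn :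
    StrictAntiOn (fun t : ℝ => (1 - exp (-t)) / t) (Ioi 0) := by
  intro s hs t ht hst
  have h := strictConvexOn_exp.secant_strict_mono (mem_univ 0) (mem_univ (-t)) (mem_univ (-s))
    (neg_ne_zero.2 (ne_of_gt ht)) (neg_ne_zero.2 (ne_of_gt hs)) (neg_lt_neg hst)
  simp only [exp_zero, sub_zero] at h
  simpa only [div_neg, ← neg_div, neg_sub] using h

lemma tendsto_one_sub_exp_neg_mul_div (c : ℝ) :
    Tendsto (fun x : ℝ => (1 - exp (-x * c)) / x) (𝓝[>] 0) (𝓝 c) := by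
  have h : HasDerivAt (fun x : ℝ => 1 - exp (-x * c)) c 0 := by
    simpa using ((hasDerivAt_neg' (0:ℝ)).mul_const c).exp.const_sub 1
  simpa [div_eq_inv_mul] using h.tendsto_slope_zero_right

lemma integral_pos_of_ae_pos {α : Type*} [MeasurableSpace α] {μ : Measure α} [NeZero μ]
    {f : α → ℝ} (hf : Integrable f μ) (hpos : ∀ᵐ x ∂μ, 0 < f x) : 0 < ∫ x, f x ∂μ := by
  rw [integral_pos_iff_support_of_nonneg_ae (hpos.mono fun _ h => h.le) hf]
  have : Function.support f =ᵐ[μ] univ := eventuallyEq_univ.2 (hpos.mono fun _ hx => hx.ne')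
  rw [measure_congr this, Measure.measure_univ_pos]
  exact NeZero.ne μ

/-- The function `g` of the paper, for an arbitrary weight `ψ` on a measure space. -/
noncomputable def expSaturation {α : Type*} [MeasurableSpace α] (μ : Measure α) (ψ : α → ℝ)
    (x : ℝ) : ℝ :=
  ∫ b, ψ b * (1 - exp (-x * ψ b)) ∂μ

lemma norm_mul_one_sub_exp_le {x c : ℝ} (hx : 0 ≤ x) (hc : 0 ≤ c) :
    ‖c * (1 - exp (-x * c))‖ ≤ c := by
  have h0 : 0 ≤ 1 - exp (-x * c) := by
    rw [sub_nonneg, exp_le_one_iff, neg_mul, neg_nonpos]; positivity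
  rw [Real.norm_of_nonneg (mul_nonneg hc h0)]
  nlinarith [exp_pos (-x * c)]

lemma norm_mul_one_sub_exp_le_mul_sq {x c : ℝ} (hx : 0 ≤ x) (hc : 0 ≤ c) :
    ‖c * (1 - exp (-x * c))‖ ≤ x * c ^ 2 := by
  have h0 : 0 ≤ 1 - exp (-x * c) := by
    rw [sub_nonneg, exp_le_one_iff, neg_mul, neg_nonpos]; positivity
  have h1 : 1 - exp (-x * c) ≤ x * c := by
    have := one_sub_le_exp_neg (x * c)
    rw [← neg_mul] at this
    linarith
  rw [Real.norm_of_nonneg (mul_nonneg hc h0)]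
  nlinarith

namespace expSaturation

variable {α : Type*} [MeasurableSpace α] {μ : Measure α} {ψ : α → ℝ}

lemma aestronglyMeasurable_integrand (hψ : AEStronglyMeasurable ψ μ) (x : ℝ) :
    AEStronglyMeasurable (fun b => ψ b * (1 - exp (-x * ψ b))) μ := by
  fun_prop

lemma integrable_integrand (hψ : Integrable ψ μ) (hψ0 : 0 ≤ᵐ[μ] ψ) {x : ℝ} (hx : 0 ≤ x) :
    Integrable (fun b => ψ b * (1 - exp (-x * ψ b))) μ :=
  hψ.mono' (aestronglyMeasurable_integrand hψ.1 x)
    (hψ0.mono fun _ hb => norm_mul_one_sub_exp_le hx hb)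

lemma le_integral (hψ : Integrable ψ μ) (hψ0 : 0 ≤ᵐ[μ] ψ) {x : ℝ} (hx : 0 ≤ x) :
    expSaturation μ ψ x ≤ ∫ b, ψ b ∂μ :=
  integral_mono_ae (integrable_integrand hψ hψ0 hx) hψ
    (hψ0.mono fun _ hb => (le_norm_self _).trans (norm_mul_one_sub_exp_le hx hb))

lemma continuousOn (hψ : Integrable ψ μ) (hψ0 : 0 ≤ᵐ[μ] ψ) :
    ContinuousOn (expSaturation μ ψ) (Ici 0) :=
  continuousOn_of_dominated (fun x _ => aestronglyMeasurable_integrand hψ.1 x)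
    (fun _ hx => hψ0.mono fun _ hb => norm_mul_one_sub_exp_le hx hb) hψ
    (ae_of_all _ fun _ => by fun_prop)

lemma strictAntiOn_div [NeZero μ] (hψ : Integrable ψ μ) (hψ0 : ∀ᵐ b ∂μ, 0 < ψ b) :
    StrictAntiOn (fun x => expSaturation μ ψ x / x) (Ioi 0) := by
  intro x (hx : 0 < x) y (hy : 0 < y) hxy
  have hψ0' : 0 ≤ᵐ[μ] ψ := hψ0.mono fun _ hb => hb.le
  have hx' := integrable_integrand hψ hψ0' hx.le
  have hy' := integrable_integrand hψ hψ0' hy.le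
  have key : 0 < y * expSaturation μ ψ x - x * expSaturation μ ψ y := by
    rw [expSaturation, expSaturation, ← integral_const_mul, ← integral_const_mul,
      ← integral_sub (hx'.const_mul y) (hy'.const_mul x)]
    refine integral_pos_of_ae_pos ((hx'.const_mul y).sub (hy'.const_mul x)) ?_
    filter_upwards [hψ0] with b hb
    have h := one_sub_exp_neg_div_strictAntiOn (mul_pos hx hb) (mul_pos hy hb)
      (mul_lt_mul_of_pos_right hxy hb)
    simp only [div_lt_div_iff₀ (mul_pos hy hb) (mul_pos hx hb)] at h
    simp only [neg_mul]
    nlinarith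
  rw [div_lt_div_iff₀ hy hx]
  linarith

lemma tendsto_div (hψ : AEStronglyMeasurable ψ μ) (hψ2 : Integrable (fun b => ψ b ^ 2) μ)
    (hψ0 : 0 ≤ᵐ[μ] ψ) :
    Tendsto (fun x => expSaturation μ ψ x / x) (𝓝[>] 0) (𝓝 (∫ b, ψ b ^ 2 ∂μ)) := by
  have h := tendsto_integral_filter_of_dominated_convergence (μ := μ) (l := 𝓝[>] (0:ℝ))
    (F := fun x b => x⁻¹ * (ψ b * (1 - exp (-x * ψ b)))) (f := fun b => ψ b ^ 2) _
    (Eventually.of_forall fun x => (aestronglyMeasurable_integrand hψ x).const_mul x⁻¹)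
    ?_ hψ2 ?_
  · refine h.congr fun x => ?_
    rw [expSaturation, integral_const_mul, div_eq_inv_mul]
  · filter_upwards [self_mem_nhdsWithin] with x (hx : 0 < x)
    filter_upwards [hψ0] with b hb
    rw [norm_mul, norm_inv, Real.norm_of_nonneg hx.le, inv_mul_le_iff₀ hx]
    exact norm_mul_one_sub_exp_le_mul_sq hx.le hb
  · refine ae_of_all _ fun b => ?_
    simpa [sq, mul_div_assoc, div_eq_inv_mul, mul_left_comm] using
      (tendsto_one_sub_exp_neg_mul_div (ψ b)).const_mul (ψ b)

end expSaturation

lemma StrictAntiOn.lt_of_tendsto_nhdsGT {f : ℝ → ℝ} {a L : ℝ} (hf : StrictAntiOn f (Ioi a))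
    (hlim : Tendsto f (𝓝[>] a) (𝓝 L)) {x : ℝ} (hx : a < x) : f x < L := by
  have hm : a < (a + x) / 2 := by linarith
  refine (hf hm hx (by linarith)).trans_le (ge_of_tendsto hlim ?_)
  filter_upwards [Ioo_mem_nhdsGT hm] with y hy
  exact (hf hy.1 hm hy.2).le

section FixedPoint

variable {g : ℝ → ℝ} {L θ : ℝ}

lemma one_lt_mul_of_pos_fixedPoint (hanti : StrictAntiOn (fun x => g x / x) (Ioi 0))
    (hlim : Tendsto (fun x => g x / x) (𝓝[>] 0) (𝓝 L)) (hθ : 0 < θ) {A : ℝ} (hA : 0 < A)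
    (hfix : A = θ * g A) : 1 < θ * L := by
  have h : g A / A < L := hanti.lt_of_tendsto_nhdsGT hlim hA
  rw [div_lt_iff₀ hA] at h
  nlinarith

lemma exists_pos_fixedPoint_of_one_lt_mul (hcont : ContinuousOn g (Ioi 0)) {C : ℝ}
    (hbdd : ∀ x, 0 < x → g x ≤ C) (hlim : Tendsto (fun x => g x / x) (𝓝[>] 0) (𝓝 L))
    (hθ : 0 < θ) (hθL : 1 < θ * L) : ∃ A, 0 < A ∧ A = θ * g A := by
  obtain ⟨a, ha, (ha0 : 0 < a)⟩ :=
    (((hlim.const_mul θ).eventually (eventually_gt_nhds hθL)).and self_mem_nhdsWithin).exists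
  have hga : a < θ * g a := by
    rwa [mul_div_assoc', lt_div_iff₀ ha0, one_mul] at ha
  set b := a + θ * |C| + 1
  have hab : a < b := by have := mul_nonneg hθ.le (abs_nonneg C); linarith
  have hgb : θ * g b < b := by
    have := mul_le_mul_of_nonneg_left ((hbdd b (ha0.trans hab)).trans (le_abs_self C)) hθ.le
    linarith [abs_nonneg C]
  obtain ⟨A, hA, hA0⟩ := intermediate_value_Icc' hab.le
    ((continuousOn_const.mul (hcont.mono fun x hx => ha0.trans_le hx.1)).sub continuousOn_id)
    (show (0:ℝ) ∈ Icc (θ * g b - b) (θ * g a - a) from ⟨by linarith, by linarith⟩)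
  exact ⟨A, ha0.trans_le hA.1, by linarith [show θ * g A - A = 0 from hA0]⟩

lemma eq_of_pos_fixedPoint (hanti : StrictAntiOn (fun x => g x / x) (Ioi 0)) {A B : ℝ}
    (hA : 0 < A) (hB : 0 < B) (hfixA : A = θ * g A) (hfixB : B = θ * g B) : A = B := by
  have hθ : θ ≠ 0 := by rintro rfl; simp at hfixA; linarith
  have hdiv : ∀ x, 0 < x → x = θ * g x → g x / x = θ⁻¹ := fun x hx hfix => by
    field_simp; linarith
  exact hanti.injOn hA hB ((hdiv A hA hfixA).trans (hdiv B hB hfixB).symm)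

end FixedPoint

lemma integrableOn_rpow_sq_Ioc {r : ℝ} (hr : -1 < 2 * r) :
    IntegrableOn (fun x : ℝ => (x ^ r) ^ 2) (Ioc 0 1) := by
  have h := (intervalIntegrable_iff_integrableOn_Ioc_of_le zero_le_one).1
    (intervalIntegral.intervalIntegrable_rpow' hr)
  refine h.congr_fun (fun x hx => ?_) measurableSet_Ioc
  rw [← rpow_mul_natCast hx.1.le, mul_comm]
  norm_num

lemma integral_rpow_sq_Ioc {r : ℝ} (hr : -1 < 2 * r) :
    ∫ x in Ioc (0:ℝ) 1, (x ^ r) ^ 2 = 1 / (2 * r + 1) := by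
  rw [setIntegral_congr_fun measurableSet_Ioc (g := fun x : ℝ => x ^ (2 * r)) fun x hx => by
      rw [← rpow_mul_natCast hx.1.le, mul_comm]; norm_num,
    ← intervalIntegral.integral_of_le zero_le_one, integral_rpow (Or.inl hr),
    one_rpow, zero_rpow (by linarith)]
  ring

/-- For `γ > 3`, `ψ(x) = x^(-1/(γ-1))`,
`g(x) = ∫₀¹ ψ(b)(1 - exp(-x ψ(b))) db`, and `θ_c = 1/∫₀¹ ψ² = (γ-3)/(γ-1)`:
for `θ > 0` the equation `A = θ g(A)` has a positive solution iff `θ > θ_c`, and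
for `θ > θ_c` the positive solution is unique. -/
theorem chungLu_fixed_point_supercritical (γ : ℝ) (hγ : 3 < γ)
    (ψ g : ℝ → ℝ) (θc : ℝ)
    (hψ : ∀ x, ψ x = x ^ (-(1 / (γ - 1))))
    (hg : ∀ x, g x = ∫ b in (0:ℝ)..1, ψ b * (1 - Real.exp (-x * ψ b)))
    (hθc : θc = 1 / ∫ x in (0:ℝ)..1, (ψ x) ^ 2) :
    θc = (γ - 3) / (γ - 1)
    ∧ (∀ θ : ℝ, 0 < θ → ((∃ A : ℝ, 0 < A ∧ A = θ * g A) ↔ θc < θ))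
    ∧ (∀ θ : ℝ, θc < θ → ∃! A : ℝ, 0 < A ∧ A = θ * g A) := by
  obtain rfl : ψ = fun x => x ^ (-(1 / (γ - 1))) := funext hψ
  set μ := volume.restrict (Ioc (0:ℝ) 1)
  have hLpos : 0 < (γ - 1) / (γ - 3) := div_pos (by linarith) (by linarith)
  have hr : -1 < 2 * -(1 / (γ - 1)) := by
    rw [neg_lt, mul_neg, neg_neg, mul_one_div, div_lt_one (by linarith)]; linarith
  have hψ2 := integrableOn_rpow_sq_Ioc hr
  have hψ1 : Integrable (fun x : ℝ => x ^ (-(1 / (γ - 1)))) μ :=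
    (intervalIntegrable_iff_integrableOn_Ioc_of_le zero_le_one).1
      (intervalIntegral.intervalIntegrable_rpow' (by linarith))
  have hψpos : ∀ᵐ x ∂μ, 0 < x ^ (-(1 / (γ - 1))) :=
    (ae_restrict_mem measurableSet_Ioc).mono fun x hx => rpow_pos_of_pos hx.1 _
  have hψ0 : 0 ≤ᵐ[μ] fun x : ℝ => x ^ (-(1 / (γ - 1))) := hψpos.mono fun _ hx => hx.le
  have hL : ∫ x, (x ^ (-(1 / (γ - 1)))) ^ 2 ∂μ = (γ - 1) / (γ - 3) := by
    have h2r : 2 * -(1 / (γ - 1)) + 1 = (γ - 3) / (γ - 1) := by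
      field_simp [show γ - 1 ≠ 0 by linarith]; ring
    rw [integral_rpow_sq_Ioc hr, h2r, one_div_div]
  have hθcL : θc = ((γ - 1) / (γ - 3))⁻¹ := by
    rw [hθc, intervalIntegral.integral_of_le zero_le_one, hL, one_div]
  obtain rfl : g = expSaturation μ _ :=
    funext fun x => (hg x).trans (intervalIntegral.integral_of_le zero_le_one)
  have hlim := expSaturation.tendsto_div hψ1.1 hψ2 hψ0
  rw [hL] at hlim
  have : NeZero μ := ⟨by simp [μ, Measure.restrict_eq_zero]⟩
  have hanti := expSaturation.strictAntiOn_div hψ1 hψpos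
  have hθ_iff : ∀ θ, θc < θ ↔ 1 < θ * ((γ - 1) / (γ - 3)) := fun θ => by
    rw [hθcL, inv_lt_iff_one_lt_mul₀ hLpos, mul_comm]
  have hexists : ∀ θ, θc < θ → ∃ A, 0 < A ∧ A = θ * expSaturation μ _ A := fun θ hθ =>
    exists_pos_fixedPoint_of_one_lt_mul
      ((expSaturation.continuousOn hψ1 hψ0).mono Ioi_subset_Ici_self)
      (fun x hx => expSaturation.le_integral hψ1 hψ0 hx.le) hlim
      ((show 0 < θc by rw [hθcL]; exact inv_pos.2 hLpos).trans hθ) ((hθ_iff θ).1 hθ)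
  refine ⟨by rw [hθcL, inv_div], fun θ hθ => ⟨fun ⟨A, hA, hfix⟩ => ?_, hexists θ⟩,
    fun θ hθ => ?_⟩
  · exact (hθ_iff θ).2 (one_lt_mul_of_pos_fixedPoint hanti hlim hθ hA hfix)
  · obtain ⟨A, hA⟩ := hexists θ hθ
    exact ⟨A, hA, fun B hB => eq_of_pos_fixedPoint hanti hB.1 hA.1 hB.2 hA.2⟩
end

section
/- Let γ > 3, ψ(x) = x^{-1/(γ-1)} on (0,1], g(x) = ∫₀¹ ψ(b)(1 − exp(−x ψ(b))) db, θ_c = 1/∫₀¹ ψ(x)² dx, and for θ > θ_c let A_θ be the unique positive solution of A = θ g(A). Then A_θ → 0 as θ ↓ θ_c. -/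
open MeasureTheory Filter Set

lemma cl_exp_ineq1 (t : ℝ) (ht : 0 ≤ t) : 1 - Real.exp (-t) ≤ t := by
  have := Real.add_one_le_exp (-t)
  linarith [Real.exp_pos (-t)]

lemma cl_exp_ineq2 (t : ℝ) (ht : 0 < t) : 1 - Real.exp (-t) < t := by
  have := Real.add_one_lt_exp (x := -t) (by linarith)
  linarith

lemma cl_exp_ineq3 (u v : ℝ) (hu : 0 ≤ u) (huv : u ≤ v) :
    u * (1 - Real.exp (-v)) ≤ v * (1 - Real.exp (-u)) := by
  have he : Real.exp (-v) = Real.exp (-u) * Real.exp (u - v) := by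
    rw [← Real.exp_add]; ring_nf
  have h1 : (u - v) + 1 ≤ Real.exp (u - v) := Real.add_one_le_exp _
  have h2 : Real.exp (-u) * (1 + u) ≤ 1 := by
    have h3 : 1 + u ≤ Real.exp u := by linarith [Real.add_one_le_exp u]
    calc Real.exp (-u) * (1 + u) ≤ Real.exp (-u) * Real.exp u :=
          mul_le_mul_of_nonneg_left h3 (Real.exp_pos _).le
      _ = 1 := by rw [← Real.exp_add]; simp
  have hp : 0 < Real.exp (-u) := Real.exp_pos _
  have h4 : u * (Real.exp (-u) * ((u - v) + 1)) ≤ u * (Real.exp (-u) * Real.exp (u - v)) :=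
    mul_le_mul_of_nonneg_left (mul_le_mul_of_nonneg_left h1 hp.le) hu
  have h5 : (v - u) * (Real.exp (-u) * (1 + u)) ≤ (v - u) * 1 :=
    mul_le_mul_of_nonneg_left h2 (sub_nonneg.2 huv)
  rw [he]
  nlinarith [h4, h5]

/-- For `γ > 3`, `ψ(x) = x^(-1/(γ-1))`,
`g(x) = ∫₀¹ ψ(b)(1 - exp(-x ψ(b))) db`, `θ_c = 1/∫₀¹ ψ²`, and `A θ` the unique
positive solution of `A = θ g(A)` for `θ > θ_c`: `A θ → 0` as `θ ↓ θ_c`. -/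
theorem chungLu_A_tendsto_zero (γ : ℝ) (hγ : 3 < γ)
    (ψ g A : ℝ → ℝ) (θc : ℝ)
    (hψ : ∀ x, ψ x = x ^ (-(1 / (γ - 1))))
    (hg : ∀ x, g x = ∫ b in (0:ℝ)..1, ψ b * (1 - Real.exp (-x * ψ b)))
    (hθc : θc = 1 / ∫ x in (0:ℝ)..1, (ψ x) ^ 2)
    (hA : ∀ θ : ℝ, θc < θ →
      0 < A θ ∧ A θ = θ * g (A θ) ∧
        ∀ A' : ℝ, 0 < A' → A' = θ * g A' → A' = A θ) :
    Tendsto A (nhdsWithin θc (Ioi θc)) (nhds 0) := by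
  set c : ℝ := -(1 / (γ - 1)) with hc
  have hγ1 : (0:ℝ) < γ - 1 := by linarith
  have hcneg : c < 0 := by
    rw [hc]; simp only [neg_lt, neg_zero]; positivity
  have hψ0 : ψ 0 = 0 := by rw [hψ 0, Real.zero_rpow hcneg.ne]
  have hψpos : ∀ b : ℝ, 0 < b → 0 < ψ b := fun b hb => by
    rw [hψ]; exact Real.rpow_pos_of_pos hb _
  have hψnn : ∀ b : ℝ, 0 ≤ b → 0 ≤ ψ b := by
    intro b hb
    rcases hb.eq_or_lt with h | h
    · rw [← h, hψ0]
    · exact (hψpos b h).le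
  -- integrability of ψ²
  have hint2 : IntervalIntegrable (fun b => (ψ b) ^ 2) volume 0 1 := by
    have hr : (-1:ℝ) < 2 * c := by
      have h1 : 2 / (γ - 1) < 1 := (div_lt_one hγ1).2 (by linarith)
      have h2 : 2 * c = -(2 / (γ - 1)) := by rw [hc]; ring
      rw [h2]; linarith
    have h0 : IntervalIntegrable (fun x : ℝ => x ^ (2 * c)) volume 0 1 :=
      intervalIntegral.intervalIntegrable_rpow' hr
    rw [intervalIntegrable_iff, uIoc_of_le zero_le_one] at h0 ⊢
    refine h0.congr_fun ?_ measurableSet_Ioc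
    intro b hb
    show b ^ (2 * c) = ψ b ^ 2
    rw [hψ b, ← Real.rpow_natCast (b ^ c) 2, ← Real.rpow_mul hb.1.le]
    norm_num [mul_comm]
  -- measurability
  have hmeas : ∀ x : ℝ, AEStronglyMeasurable
      (fun b => ψ b * (1 - Real.exp (-x * ψ b))) (volume.restrict (Ioc (0:ℝ) 1)) := by
    intro x
    have hm : Measurable fun b : ℝ => b ^ c * (1 - Real.exp (-x * b ^ c)) := by
      fun_prop
    refine hm.aestronglyMeasurable.congr ?_
    filter_upwards with b
    rw [hψ b]
  -- integrability of the integrand of g for x ≥ 0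
  have hintf : ∀ x : ℝ, 0 ≤ x →
      IntervalIntegrable (fun b => ψ b * (1 - Real.exp (-x * ψ b))) volume 0 1 := by
    intro x hx
    have h2 : IntervalIntegrable (fun b => x * (ψ b) ^ 2) volume 0 1 := hint2.const_mul x
    rw [intervalIntegrable_iff, uIoc_of_le zero_le_one] at h2 ⊢
    refine MeasureTheory.Integrable.mono h2 (hmeas x) ?_
    filter_upwards [ae_restrict_mem measurableSet_Ioc] with b hb
    have hψb := hψpos b hb.1
    have h1 : 0 ≤ 1 - Real.exp (-x * ψ b) := by
      have : Real.exp (-x * ψ b) ≤ 1 := Real.exp_le_one_iff.2 (by nlinarith)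
      linarith
    have h3 : 1 - Real.exp (-x * ψ b) ≤ x * ψ b := by
      have := cl_exp_ineq1 (x * ψ b) (by positivity)
      rw [neg_mul]; linarith
    rw [Real.norm_eq_abs, Real.norm_eq_abs, abs_of_nonneg (by positivity),
      abs_of_nonneg (by nlinarith)]
    nlinarith
  set I : ℝ := ∫ x in (0:ℝ)..1, (ψ x) ^ 2 with hI
  have hIpos : 0 < I :=
    intervalIntegral.intervalIntegral_pos_of_pos_on hint2
      (fun b hb => pow_pos (hψpos b hb.1) 2) one_pos
  have hθcpos : 0 < θc := by rw [hθc]; positivity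
  have hθcI : θc * I = 1 := by rw [hθc]; field_simp
  -- g is nonnegative for nonneg argument
  have hgnn : ∀ x : ℝ, 0 ≤ x → 0 ≤ g x := by
    intro x hx
    rw [hg]
    apply intervalIntegral.integral_nonneg zero_le_one
    intro b hb
    have h1 : Real.exp (-x * ψ b) ≤ 1 :=
      Real.exp_le_one_iff.2 (by nlinarith [hψnn b hb.1])
    nlinarith [hψnn b hb.1]
  -- strict upper bound : g ε < ε * I for ε > 0
  have hglt : ∀ ε : ℝ, 0 < ε → g ε < ε * I := by
    intro ε hε
    have hsub : 0 < ∫ b in (0:ℝ)..1,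
        (ε * (ψ b) ^ 2 - ψ b * (1 - Real.exp (-ε * ψ b))) := by
      apply intervalIntegral.intervalIntegral_pos_of_pos_on
        ((hint2.const_mul ε).sub (hintf ε hε.le))
      · intro b hb
        have hψb := hψpos b hb.1
        have h2 : 1 - Real.exp (-ε * ψ b) < ε * ψ b := by
          have := cl_exp_ineq2 (ε * ψ b) (by positivity)
          rw [neg_mul]; linarith
        nlinarith
      · exact one_pos
    rw [intervalIntegral.integral_sub (hint2.const_mul ε) (hintf ε hε.le),
      intervalIntegral.integral_const_mul] at hsub
    rw [hg, hI]
    linarith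
  -- monotonicity : ε ≤ a → ε * g a ≤ a * g ε   (for 0 < ε)
  have hgmono : ∀ ε a : ℝ, 0 < ε → ε ≤ a → ε * g a ≤ a * g ε := by
    intro ε a hε hεa
    have ha : 0 < a := lt_of_lt_of_le hε hεa
    rw [hg, hg, ← intervalIntegral.integral_const_mul, ← intervalIntegral.integral_const_mul]
    apply intervalIntegral.integral_mono_on zero_le_one
      ((hintf a ha.le).const_mul ε) ((hintf ε hε.le).const_mul a)
    intro b hb
    have hψb := hψnn b hb.1
    have key := cl_exp_ineq3 (ε * ψ b) (a * ψ b)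
      (by positivity) (by nlinarith)
    rw [neg_mul, neg_mul]
    nlinarith [key]
  -- final assembly
  rw [Metric.tendsto_nhdsWithin_nhds]
  intro ε hε
  have hgε0 : 0 ≤ g ε := hgnn ε hε.le
  have hkey : θc * g ε < ε := by
    have h := mul_lt_mul_of_pos_left (hglt ε hε) hθcpos
    nlinarith [h, hθcI]
  refine ⟨(ε - θc * g ε) / (g ε + 1), div_pos (by linarith) (by positivity), ?_⟩
  intro θ hθ hdist
  obtain ⟨hApos, hAeq, _⟩ := hA θ hθ
  rw [Real.dist_eq, sub_zero, abs_of_pos hApos]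
  by_contra hcon
  push_neg at hcon
  -- θ < θc + δ
  rw [Real.dist_eq, abs_of_pos (sub_pos.2 hθ)] at hdist
  have hθθc : 0 < θ - θc := sub_pos.2 hθ
  have hδ : (θ - θc) * (g ε + 1) < ε - θc * g ε :=
    (lt_div_iff₀ (by positivity)).1 hdist
  have hθgε : θ * g ε < ε := by nlinarith [mul_nonneg hθθc.le hgε0]
  have hmono := hgmono ε (A θ) hε hcon
  -- ε * A θ = θ * (ε * g (A θ)) ≤ θ * (A θ * g ε) < A θ * ε
  have hθpos : 0 < θ := lt_trans hθcpos hθ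
  have h1 : ε * A θ ≤ θ * (A θ * g ε) := by
    calc ε * A θ = θ * (ε * g (A θ)) := by nth_rewrite 1 [hAeq]; ring
      _ ≤ θ * (A θ * g ε) := by
          apply mul_le_mul_of_nonneg_left hmono hθpos.le
  nlinarith [mul_lt_mul_of_pos_left hθgε hApos]
end
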